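/- For every nonnegative integer n, b^2_{3,4}(2n) ≡ b_{3,4}(n) (mod 4). -/

import Mathlib

/-!
A 2-colored partition is a pair `(A, B)` of partitions into admissible parts (divisible by
neither `l` nor `4`, with `l` odd). Write `A = M + C`, `B = M + D` with `M = A ∩ B`; then `C`
and `D` have disjoint supports, so `C + D` together with the support of `C` is an overpartition.
This is the identity `(1 - q^j)⁻² = (1 - q^{2j})⁻¹ (1 + q^j) / (1 - q^j)`, and it gives
`b²(2n) = ∑_{m ≤ n} b(m) p̄(2n - 2m)`, where `p̄(r)` counts overpartitions of `r` into admissible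
parts. A partition of `r` with `d` distinct part sizes carries `2^d` overlinings, so modulo 4 only
the partitions `j + j + ⋯ + j` survive and `p̄(r) ≡ 2 · #{admissible j ∣ r}`. For even `r` the
admissible divisors come in pairs `j, 2j` with `j` odd, hence `p̄(r) ≡ 0 [MOD 4]` for even `r > 0`
and only the term `m = n` remains.
-/

/-- `coloredRegular k l m n` is the number of `k`-colored partitions of `n` into parts
divisible by neither `l` nor `m`, i.e. the coefficient of `q^n` in
`∏_{j ≥ 1, l ∤ j, m ∤ j} (1 - q^j)^{-k}`.  A `k`-colored partition is a multiset of
(part, color) pairs, where parts are positive integers not divisible by `l` or `m`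
and colors range over `{0, …, k-1}`. -/
noncomputable def coloredRegular (k l m n : ℕ) : ℕ :=
  Nat.card {M : Multiset (ℕ × ℕ) //
    (∀ x ∈ M, ¬ l ∣ x.1 ∧ ¬ m ∣ x.1 ∧ x.2 < k) ∧ (M.map Prod.fst).sum = n}

namespace Multiset

variable {α : Type*} [DecidableEq α]

def interSubEquiv :
    Multiset α × Multiset α ≃
      Multiset α × {CD : Multiset α × Multiset α // Disjoint CD.1 CD.2} where
  toFun AB := (AB.1 ∩ AB.2, ⟨(AB.1 - AB.2, AB.2 - AB.1), by
    rw [← inter_eq_zero_iff_disjoint]; ext a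
    simp only [count_inter, count_sub, count_zero]; omega⟩)
  invFun MCD := (MCD.1 + MCD.2.1.1, MCD.1 + MCD.2.1.2)
  left_inv AB := by
    ext a <;> simp only [count_add, count_inter, count_sub] <;> omega
  right_inv MCD := by
    obtain ⟨M, ⟨C, D⟩, hCD⟩ := MCD
    have h : ∀ a, min (count a C) (count a D) = 0 := fun a => by
      rw [← count_inter, inter_eq_zero_iff_disjoint.mpr hCD, count_zero]
    ext a
    · simp only [count_add, count_inter]; have := h a; omega
    · simp only [count_sub, count_add]; have := h a; omega
    · simp only [count_sub, count_add]; have := h a; omega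

def disjointEquivMarked :
    {CD : Multiset α × Multiset α // Disjoint CD.1 CD.2} ≃
      {Ls : Multiset α × Finset α // Ls.2 ⊆ Ls.1.toFinset} where
  toFun CD := ⟨(CD.1.1 + CD.1.2, CD.1.1.toFinset), by
    simp only [Finset.subset_iff, mem_toFinset, mem_add]; exact fun _ => Or.inl⟩
  invFun Ls := ⟨(Ls.1.1.filter (· ∈ Ls.1.2), Ls.1.1.filter (· ∉ Ls.1.2)),
    disjoint_left.mpr fun ha hb => (mem_filter.mp hb).2 (mem_filter.mp ha).2⟩
  left_inv CD := by
    obtain ⟨⟨C, D⟩, hCD⟩ := CD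
    have hD : ∀ a ∈ D, a ∉ C := fun a ha hC => disjoint_left.mp hCD hC ha
    ext1; ext1
    · simp only [filter_add, mem_toFinset]
      rw [filter_eq_self.mpr (fun _ h => h), filter_eq_nil.mpr hD, add_zero]
    · simp only [filter_add, mem_toFinset]
      rw [filter_eq_nil.mpr (fun _ h h' => h' h), filter_eq_self.mpr hD, zero_add]
  right_inv Ls := by
    obtain ⟨⟨L, s⟩, hs⟩ := Ls
    ext1; ext1
    · exact filter_add_not _ _
    · ext a; simpa using fun h => mem_toFinset.mp (hs h)

def prodEquivInterMarked :
    Multiset α × Multiset α ≃ Multiset α × {Ls : Multiset α × Finset α // Ls.2 ⊆ Ls.1.toFinset} :=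
  interSubEquiv.trans (Equiv.prodCongr (Equiv.refl _) disjointEquivMarked)

lemma add_eq_prodEquivInterMarked (AB : Multiset α × Multiset α) :
    AB.1 + AB.2 = (prodEquivInterMarked AB).1 + (prodEquivInterMarked AB).1 +
      (prodEquivInterMarked AB).2.1.1 := by
  ext a
  simp only [prodEquivInterMarked, interSubEquiv, disjointEquivMarked, Equiv.trans_apply,
    Equiv.prodCongr_apply, Equiv.coe_fn_mk, Prod.map, Equiv.refl_apply, count_add, count_inter,
    count_sub]
  omega

end Multiset

namespace ColoredPartition

open Finset

def Partitions (p : ℕ → Prop) (n : ℕ) : Set (Multiset ℕ) := {L | (∀ x ∈ L, p x) ∧ L.sum = n}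

def PartitionPairs (p : ℕ → Prop) (n : ℕ) : Set (Multiset ℕ × Multiset ℕ) :=
  {AB | AB.1 + AB.2 ∈ Partitions p n}

/-- `(L, s)` encodes the overpartition of `L` in which the first occurrence of each part size
in `s` is overlined. -/
def Overpartitions (p : ℕ → Prop) (n : ℕ) : Set (Multiset ℕ × Finset ℕ) :=
  {Ls | Ls.1 ∈ Partitions p n ∧ Ls.2 ⊆ Ls.1.toFinset}

variable {α : Type*}

def uncolorEquiv : {M : Multiset (α × ℕ) // ∀ x ∈ M, x.2 < 1} ≃ Multiset α where
  toFun M := M.1.map Prod.fst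
  invFun A := ⟨A.map (·, 0), by simp⟩
  left_inv M := by
    ext1
    change (M.1.map Prod.fst).map _ = M.1
    conv_rhs => rw [← Multiset.map_id M.1]
    rw [Multiset.map_map]
    exact Multiset.map_congr rfl fun x hx => Prod.ext rfl (Nat.lt_one_iff.mp (M.2 x hx)).symm
  right_inv A := by simp [Multiset.map_map]

def splitColorsEquiv : {M : Multiset (α × ℕ) // ∀ x ∈ M, x.2 < 2} ≃ Multiset α × Multiset α where
  toFun M := ((M.1.filter (·.2 = 0)).map Prod.fst, (M.1.filter (·.2 ≠ 0)).map Prod.fst)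
  invFun AB := ⟨AB.1.map (·, 0) + AB.2.map (·, 1), by simp; omega⟩
  left_inv M := by
    ext1
    conv_rhs => rw [← Multiset.filter_add_not (·.2 = 0) M.1]
    simp only [Multiset.map_map]
    congr 1
    · conv_rhs => rw [← Multiset.map_id (Multiset.filter _ _)]
      exact Multiset.map_congr rfl fun x hx => Prod.ext rfl (Multiset.mem_filter.mp hx).2.symm
    · conv_rhs => rw [← Multiset.map_id (Multiset.filter _ _)]
      refine Multiset.map_congr rfl fun x hx => Prod.ext rfl ?_
      have := M.2 x (Multiset.mem_of_mem_filter hx)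
      have := (Multiset.mem_filter.mp hx).2
      simp only [Function.comp_apply, id_eq]; omega
  right_inv AB := by simp [Multiset.filter_add, Multiset.filter_map, Multiset.map_map]

lemma splitColorsEquiv_add (M : {M : Multiset (α × ℕ) // ∀ x ∈ M, x.2 < 2}) :
    (splitColorsEquiv M).1 + (splitColorsEquiv M).2 = M.1.map Prod.fst := by
  simp only [splitColorsEquiv, Equiv.coe_fn_mk, ← Multiset.map_add, Multiset.filter_add_not]

lemma coloredRegular_eq_card (k l m n : ℕ) :
    coloredRegular k l m n = Nat.card {M : {M : Multiset (ℕ × ℕ) // ∀ x ∈ M, x.2 < k} //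
      M.1.map Prod.fst ∈ Partitions (fun j => ¬ l ∣ j ∧ ¬ m ∣ j) n} :=
  Nat.card_congr
    { toFun := fun M => ⟨⟨M.1, fun x hx => (M.2.1 x hx).2.2⟩, fun x hx => by
        obtain ⟨y, hy, rfl⟩ := Multiset.mem_map.mp hx
        exact ⟨(M.2.1 y hy).1, (M.2.1 y hy).2.1⟩, M.2.2⟩
      invFun := fun M => ⟨M.1.1, fun x hx =>
        ⟨(M.2.1 _ (Multiset.mem_map_of_mem _ hx)).1, (M.2.1 _ (Multiset.mem_map_of_mem _ hx)).2,
          M.1.2 x hx⟩, M.2.2⟩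
      left_inv := fun _ => rfl
      right_inv := fun _ => rfl }

lemma coloredRegular_one (l m n : ℕ) :
    coloredRegular 1 l m n = Nat.card (Partitions (fun j => ¬ l ∣ j ∧ ¬ m ∣ j) n) := by
  rw [coloredRegular_eq_card]
  exact Nat.card_congr (uncolorEquiv.subtypeEquiv fun _ => Iff.rfl)

lemma coloredRegular_two (l m n : ℕ) :
    coloredRegular 2 l m n = Nat.card (PartitionPairs (fun j => ¬ l ∣ j ∧ ¬ m ∣ j) n) := by
  rw [coloredRegular_eq_card]
  exact Nat.card_congr (splitColorsEquiv.subtypeEquiv fun M => by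
    rw [PartitionPairs, Set.mem_ofPred_eq, splitColorsEquiv_add])

variable {p : ℕ → Prop}

lemma finite_partitions (hp : ∀ x, p x → 0 < x) (n : ℕ) : (Partitions p n).Finite :=
  (Set.finite_range fun μ : n.Partition => μ.parts).subset fun L hL =>
    ⟨⟨L, fun hx => hp _ (hL.1 _ hx), hL.2⟩, rfl⟩

def overpartitionsEquivSigma (n : ℕ) :
    Overpartitions p n ≃ Σ L : Partitions p n, {s : Finset ℕ // s ⊆ L.1.toFinset} where
  toFun Ls := ⟨⟨Ls.1.1, Ls.2.1⟩, ⟨Ls.1.2, Ls.2.2⟩⟩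
  invFun Ls := ⟨(Ls.1.1, Ls.2.1), Ls.1.2, Ls.2.2⟩
  left_inv _ := rfl
  right_inv _ := rfl

lemma card_overpartitions (n : ℕ) [Fintype (Partitions p n)] :
    Nat.card (Overpartitions p n) = ∑ L : Partitions p n, 2 ^ #L.1.toFinset := by
  rw [Nat.card_congr (overpartitionsEquivSigma n), Nat.card_sigma]
  refine Fintype.sum_congr _ _ fun L => ?_
  rw [← card_powerset, ← Nat.card_eq_finsetCard]
  exact Nat.card_congr (Equiv.subtypeEquivRight fun _ => mem_powerset.symm)

lemma finite_overpartitions (hp : ∀ x, p x → 0 < x) (n : ℕ) : (Overpartitions p n).Finite := by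
  have := (finite_partitions hp n).to_subtype
  exact Set.finite_coe_iff.mp (Finite.of_equiv _ (overpartitionsEquivSigma n).symm)

lemma card_overpartitions_zero (hp : ∀ x, p x → 0 < x) : Nat.card (Overpartitions p 0) = 1 := by
  have h : Overpartitions p 0 = {(0, ∅)} := by
    ext ⟨L, s⟩
    simp only [Overpartitions, Partitions, Set.mem_ofPred_eq, Set.mem_singleton_iff, Prod.mk.injEq]
    constructor
    · rintro ⟨⟨hL, hsum⟩, hs⟩
      obtain rfl : L = 0 := Multiset.eq_zero_of_forall_notMem fun x hx =>
        (hp x (hL x hx)).ne' (Multiset.sum_eq_zero_iff.mp hsum x hx)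
      simpa using hs
    · rintro ⟨rfl, rfl⟩
      simp
  rw [h, Nat.card_unique]

lemma add_add_mem_partitions {M L : Multiset ℕ} {m N : ℕ} (hm : M.sum = m) :
    M + M + L ∈ Partitions p N ↔
      M ∈ Partitions p m ∧ L ∈ Partitions p (N - 2 * m) ∧ 2 * m ≤ N := by
  subst hm
  simp only [Partitions, Set.mem_ofPred_eq, Multiset.mem_add, Multiset.sum_add]
  constructor
  · rintro ⟨h, hsum⟩
    exact ⟨⟨fun x hx => h x (Or.inl (Or.inl hx)), trivial⟩, ⟨fun x hx => h x (Or.inr hx), by omega⟩,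
      by omega⟩
  · rintro ⟨⟨hM, -⟩, ⟨hL, hsum⟩, hle⟩
    exact ⟨fun x => by rintro ((hx | hx) | hx) <;> simp_all, by omega⟩

def partitionPairsFiberEquiv (N m : ℕ) (hm : 2 * m ≤ N) :
    {AB : PartitionPairs p N // (Multiset.prodEquivInterMarked AB.1).1.sum = m} ≃
      Partitions p m × Overpartitions p (N - 2 * m) where
  toFun AB :=
    have h : _ ∈ Partitions p N := Multiset.add_eq_prodEquivInterMarked AB.1.1 ▸ AB.1.2
    have h := (add_add_mem_partitions AB.2).mp h
    (⟨_, h.1⟩, ⟨_, h.2.1, (Multiset.prodEquivInterMarked AB.1.1).2.2⟩)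
  invFun ML := ⟨⟨Multiset.prodEquivInterMarked.symm (ML.1.1, ⟨ML.2.1, ML.2.2.2⟩), by
      change _ + _ ∈ Partitions p N
      rw [Multiset.add_eq_prodEquivInterMarked, Equiv.apply_symm_apply]
      exact (add_add_mem_partitions ML.1.2.2).mpr ⟨ML.1.2, ML.2.2.1, hm⟩⟩, by
    simp [ML.1.2.2]⟩
  left_inv AB := by ext1; ext1; simp
  right_inv ML := by ext1 <;> ext1 <;> simp

lemma card_partitionPairs (hp : ∀ x, p x → 0 < x) (N : ℕ) :
    Nat.card (PartitionPairs p N) =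
      ∑ m ∈ range (N / 2 + 1),
        Nat.card (Partitions p m) * Nat.card (Overpartitions p (N - 2 * m)) := by
  let f : PartitionPairs p N → Fin (N / 2 + 1) := fun AB =>
    ⟨(Multiset.prodEquivInterMarked AB.1).1.sum, by
      have h : AB.1.1 + AB.1.2 ∈ Partitions p N := AB.2
      rw [Multiset.add_eq_prodEquivInterMarked] at h
      have := ((add_add_mem_partitions rfl).mp h).2.2
      omega⟩
  have fiber (m : Fin (N / 2 + 1)) :
      {AB // f AB = m} ≃ Partitions p m × Overpartitions p (N - 2 * m) :=
    (Equiv.subtypeEquivRight fun _ => Fin.ext_iff).trans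
      (partitionPairsFiberEquiv N m (by omega))
  have (n : ℕ) := (finite_partitions hp n).to_subtype
  have (n : ℕ) := (finite_overpartitions hp n).to_subtype
  have (m : Fin (N / 2 + 1)) : Finite {AB // f AB = m} := Finite.of_equiv _ (fiber m).symm
  rw [← Nat.card_congr (Equiv.sigmaFiberEquiv f), Nat.card_sigma,
    ← Fin.sum_univ_eq_sum_range
      (fun m => Nat.card (Partitions p m) * Nat.card (Overpartitions p (N - 2 * m)))]
  exact Fintype.sum_congr _ _ fun m => by rw [Nat.card_congr (fiber m), Nat.card_prod]

lemma card_partitions_toFinset_card_eq_one [DecidablePred p] {r : ℕ} (hr : r ≠ 0) :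
    Nat.card {L : Partitions p r // #L.1.toFinset = 1} = #{j ∈ r.divisors | p j} := by
  have hdiv {j : ℕ} (hj : j ∈ r.divisors) : r / j ≠ 0 :=
    (Nat.div_pos (Nat.divisor_le hj) (Nat.pos_of_mem_divisors hj)).ne'
  let single (j : {j // j ∈ {j ∈ r.divisors | p j}}) : {L : Partitions p r // #L.1.toFinset = 1} :=
    have hj := mem_filter.mp j.2
    ⟨⟨Multiset.replicate (r / j) j, fun x hx => Multiset.eq_of_mem_replicate hx ▸ hj.2, by
      rw [Multiset.sum_replicate, smul_eq_mul, Nat.div_mul_cancel (Nat.dvd_of_mem_divisors hj.1)]⟩,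
      by rw [Multiset.toFinset_replicate, if_neg (hdiv hj.1), card_singleton]⟩
  rw [← Nat.card_eq_finsetCard, Nat.card_eq_of_bijective single]
  refine ⟨fun j j' h => Subtype.ext ?_, fun L => ?_⟩
  · have h : Multiset.replicate (r / j) j.1 = Multiset.replicate (r / j') j'.1 :=
      congrArg (·.1.1) h
    exact Multiset.eq_of_mem_replicate
      (h ▸ Multiset.mem_replicate.mpr ⟨hdiv (mem_filter.mp j.2).1, rfl⟩)
  · obtain ⟨a, ha⟩ := card_eq_one.mp L.2
    have hall : ∀ x ∈ L.1.1, x = a := fun x hx => by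
      simpa [ha] using Multiset.mem_toFinset.mpr hx
    have ha_mem : a ∈ L.1.1 := Multiset.mem_toFinset.mp (ha ▸ mem_singleton_self a)
    have hL : L.1.1 = Multiset.replicate (Multiset.card L.1.1) a :=
      Multiset.eq_replicate_card.mpr hall
    have hsum : Multiset.card L.1.1 * a = r := by
      rw [← smul_eq_mul, ← Multiset.sum_replicate, ← hL, L.1.2.2]
    have hapos : 0 < a := Nat.pos_of_ne_zero fun h => hr (by rw [← hsum, h, mul_zero])
    have ha_div : a ∈ r.divisors := Nat.mem_divisors.mpr ⟨Dvd.intro_left _ hsum, hr⟩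
    refine ⟨⟨a, mem_filter.mpr ⟨ha_div, L.1.2.1 a ha_mem⟩⟩, Subtype.ext (Subtype.ext ?_)⟩
    change Multiset.replicate (r / a) a = L.1.1
    rw [Nat.div_eq_of_eq_mul_left hapos hsum.symm]
    exact hL.symm

lemma card_overpartitions_cast_zmod_four [DecidablePred p] (hp : ∀ x, p x → 0 < x) {r : ℕ}
    (hr : r ≠ 0) :
    (Nat.card (Overpartitions p r) : ZMod 4) = 2 * #{j ∈ r.divisors | p j} := by
  have := (finite_partitions hp r).fintype
  have two_pow_cast (L : Partitions p r) :
      ((2 ^ #L.1.toFinset : ℕ) : ZMod 4) = if #L.1.toFinset = 1 then 2 else 0 := by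
    have hL : L.1 ≠ 0 := fun h => hr (L.2.2 ▸ h ▸ Multiset.sum_zero)
    obtain ⟨d, hd⟩ := Nat.exists_eq_add_of_lt (card_pos.mpr (Multiset.toFinset_nonempty.mpr hL))
    rcases d with _ | d
    · simp [hd]
    · rw [if_neg (by omega), hd, show 0 + (d + 1) + 1 = d + 2 by ring, pow_add]
      push_cast
      rw [show (4 : ZMod 4) = 0 from rfl, mul_zero]
  rw [card_overpartitions, Nat.cast_sum, Fintype.sum_congr _ _ two_pow_cast, sum_ite,
    sum_const_zero, add_zero, sum_const, nsmul_eq_mul, mul_comm,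
    ← card_partitions_toFinset_card_eq_one hr, Nat.card_eq_fintype_card, Fintype.card_subtype]

lemma even_card_filter_divisors {l r : ℕ} (hl : Odd l) (hr : Even r) :
    Even #{j ∈ r.divisors | ¬ l ∣ j ∧ ¬ 4 ∣ j} := by
  rw [← card_filter_add_card_filter_not Odd]
  suffices h : #{j ∈ {j ∈ r.divisors | ¬ l ∣ j ∧ ¬ 4 ∣ j} | Odd j} =
      #{j ∈ {j ∈ r.divisors | ¬ l ∣ j ∧ ¬ 4 ∣ j} | ¬ Odd j} from ⟨_, congrArg (· + _) h⟩
  refine card_nbij' (2 * ·) (· / 2) (fun j hj => ?_) (fun j hj => ?_) (fun j hj => ?_)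
    (fun j hj => ?_) <;>
    simp only [coe_filter, Set.mem_ofPred_eq, mem_filter, Nat.mem_divisors, Nat.odd_iff] at hj ⊢
  · obtain ⟨⟨⟨hjr, hr0⟩, hlj, h4j⟩, hodd⟩ := hj
    have h2j : 2 * j ∣ r := (Nat.coprime_two_left.mpr (Nat.odd_iff.mpr hodd)).mul_dvd_of_dvd_of_dvd
      (even_iff_two_dvd.mp hr) hjr
    exact ⟨⟨⟨h2j, hr0⟩, fun h => hlj ((Nat.coprime_two_right.mpr hl).dvd_of_dvd_mul_left h),
      by omega⟩, by omega⟩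
  · obtain ⟨⟨⟨hjr, hr0⟩, hlj, h4j⟩, heven⟩ := hj
    have hdvd : j / 2 ∣ j := Nat.div_dvd_of_dvd (by omega)
    exact ⟨⟨⟨hdvd.trans hjr, hr0⟩, fun h => hlj (h.trans hdvd), by omega⟩, by omega⟩
  · omega
  · omega

theorem coloredRegular_two_double_modEq {l : ℕ} (hl : Odd l) (n : ℕ) :
    coloredRegular 2 l 4 (2 * n) ≡ coloredRegular 1 l 4 n [MOD 4] := by
  have hp (j : ℕ) (hj : ¬ l ∣ j ∧ ¬ 4 ∣ j) : 0 < j :=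
    Nat.pos_of_ne_zero fun h => hj.2 (h ▸ dvd_zero 4)
  have overpartitions_vanish {m : ℕ} (hm : m < n) :
      (Nat.card (Overpartitions (fun j => ¬ l ∣ j ∧ ¬ 4 ∣ j) (2 * n - 2 * m)) : ZMod 4) = 0 := by
    obtain ⟨k, hk⟩ := even_card_filter_divisors hl (r := 2 * n - 2 * m) ⟨n - m, by omega⟩
    rw [card_overpartitions_cast_zmod_four hp (by omega), hk]
    push_cast
    rw [← two_mul, ← mul_assoc, show (2 * 2 : ZMod 4) = 0 from rfl, zero_mul]
  rw [← ZMod.natCast_eq_natCast_iff, coloredRegular_two, coloredRegular_one,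
    card_partitionPairs hp, Nat.mul_div_cancel_left _ two_pos, sum_range_succ, Nat.sub_self,
    card_overpartitions_zero hp, mul_one, Nat.cast_add, Nat.cast_sum,
    sum_eq_zero fun m hm => by rw [Nat.cast_mul, overpartitions_vanish (mem_range.mp hm), mul_zero],
    zero_add]

end ColoredPartition

theorem stmt_1 (n : ℕ) :
    coloredRegular 2 3 4 (2 * n) ≡ coloredRegular 1 3 4 n [MOD 4] :=
  ColoredPartition.coloredRegular_two_double_modEq (by decide) n
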